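/- arXiv:2311.14893 — 2 statements merged into one kernel-verified Lean document; each statement's English description precedes it below -/
import Mathlib

section
/- The nullity of the p-th Dirac operator equals Σ_{i=0}^p β_i if and only if d_{p+1} is injective, where β_i = dim H_i(C_•); in general η(D_p) ≥ Σ_{i=0}^p β_i. -/
/-!
The `j`-th component of `D_p x` is `d_{j+1} x_{j+1} + d_j^* x_{j-1}`. Since `d_j d_{j+1} = 0`
the first summand lies in `ker d_j`, while the second lies in `range d_j^* = (ker d_j)ᗮ`, so the
component vanishes iff both summands do. Hence `ker D_p` is the product of the spaces
`ker d_i ⊓ ker d_{i+1}^* = ker d_i ⊓ (range d_{i+1})ᗮ ≅ H_i` for `i ≤ p` and of `ker d_{p+1}`, i.e.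
`η(D_p) = ∑_{i ≤ p} β_i + dim ker d_{p+1}`.
-/

open LinearMap

variable {𝕜 : Type} [RCLike 𝕜] {C : ℕ → Type}
  [∀ n, NormedAddCommGroup (C n)] [∀ n, InnerProductSpace 𝕜 (C n)]
  [∀ n, FiniteDimensional 𝕜 (C n)]

/-- The "up" part of the Dirac operator: superdiagonal blocks `B_{i+1}` (the boundary
maps `d_{i+1}`). -/
noncomputable def diracUp (d : ∀ n : ℕ, C n →ₗ[𝕜] C (n - 1)) (p : ℕ) :
    (∀ i : Fin (p + 2), C i) →ₗ[𝕜] ∀ i : Fin (p + 2), C i :=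
  LinearMap.pi fun j =>
    if h : (j : ℕ) + 1 < p + 2 then
      ((d ((j : ℕ) + 1)).comp (LinearMap.proj (⟨(j : ℕ) + 1, h⟩ : Fin (p + 2)))
        : (∀ i : Fin (p + 2), C i) →ₗ[𝕜] C (j : ℕ))
    else 0

/-- The "down" part of the Dirac operator: subdiagonal blocks `B_i^*` (adjoints of the
boundary maps). -/
noncomputable def diracDown (d : ∀ n : ℕ, C n →ₗ[𝕜] C (n - 1)) (p : ℕ) :
    (∀ i : Fin (p + 2), C i) →ₗ[𝕜] ∀ i : Fin (p + 2), C i :=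
  LinearMap.pi fun j =>
    if h : 0 < (j : ℕ) then
      ((adjoint (d (j : ℕ))).comp
          (LinearMap.proj (⟨(j : ℕ) - 1, lt_of_le_of_lt (Nat.sub_le _ _) j.isLt⟩ : Fin (p + 2)))
        : (∀ i : Fin (p + 2), C i) →ₗ[𝕜] C (j : ℕ))
    else 0

/-- The `p`-th Dirac operator: the block tridiagonal operator on
`C 0 ⊕ C 1 ⊕ ⋯ ⊕ C (p+1)` with superdiagonal blocks the boundary maps, subdiagonal
blocks their adjoints, and zero diagonal blocks. -/
noncomputable def dirac (d : ∀ n : ℕ, C n →ₗ[𝕜] C (n - 1)) (p : ℕ) :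
    (∀ i : Fin (p + 2), C i) →ₗ[𝕜] ∀ i : Fin (p + 2), C i :=
  diracUp d p + diracDown d p

/-- The `p`-th (Hodge) Laplacian `Δ_p = d_{p+1} ∘ d_{p+1}^* + d_p^* ∘ d_p`. -/
noncomputable def laplacian (d : ∀ n : ℕ, C n →ₗ[𝕜] C (n - 1)) (p : ℕ) :
    C p →ₗ[𝕜] C p :=
  (d (p + 1) ∘ₗ adjoint (d (p + 1)) : C p →ₗ[𝕜] C p) + adjoint (d p) ∘ₗ d p

/-- The `p`-th down Laplacian `Δ_p^Down = d_p^* ∘ d_p`. -/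
noncomputable def laplacianDown (d : ∀ n : ℕ, C n →ₗ[𝕜] C (n - 1)) (p : ℕ) :
    C p →ₗ[𝕜] C p :=
  adjoint (d p) ∘ₗ d p

theorem Submodule.finrank_quotient_comap_subtype_eq_finrank_inf_orthogonal {E : Type*}
    [NormedAddCommGroup E] [InnerProductSpace 𝕜 E] [FiniteDimensional 𝕜 E] {U W : Submodule 𝕜 E}
    (h : U ≤ W) :
    Module.finrank 𝕜 (W ⧸ U.comap W.subtype) = Module.finrank 𝕜 ↥(W ⊓ Uᗮ) := by
  have hquot := Submodule.finrank_quotient_add_finrank (U.comap W.subtype)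
  have hcomap := (Submodule.comapSubtypeEquivOfLe h).finrank_eq
  have horth := Submodule.finrank_add_inf_finrank_orthogonal h
  rw [inf_comm] at horth
  omega

namespace LinearMap

variable {E F : Type*} [NormedAddCommGroup E] [InnerProductSpace 𝕜 E] [FiniteDimensional 𝕜 E]
  [NormedAddCommGroup F] [InnerProductSpace 𝕜 F] [FiniteDimensional 𝕜 F]

theorem disjoint_ker_range_adjoint (f : E →ₗ[𝕜] F) : Disjoint (ker f) (range (adjoint f)) := by
  rw [← orthogonal_ker]
  exact (ker f).orthogonal_disjoint

theorem add_eq_zero_iff_of_mem_ker_of_mem_range_adjoint (f : E →ₗ[𝕜] F) {a b : E}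
    (ha : a ∈ ker f) (hb : b ∈ range (adjoint f)) : a + b = 0 ↔ a = 0 ∧ b = 0 := by
  refine ⟨fun h => ?_, fun h => by rw [h.1, h.2, add_zero]⟩
  have hb' : b ∈ ker f := by
    rw [eq_neg_of_add_eq_zero_right h]
    exact neg_mem ha
  have hb0 : b = 0 := (Submodule.disjoint_def.mp (disjoint_ker_range_adjoint f)) b hb' hb
  exact ⟨by rwa [hb0, add_zero] at h, hb0⟩

theorem finrank_quotient_comap_range_eq_finrank_ker_inf_ker_adjoint {G : Type*}
    [AddCommGroup G] [Module 𝕜 G] (f : E →ₗ[𝕜] G) (g : F →ₗ[𝕜] E) (h : f ∘ₗ g = 0) :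
    Module.finrank 𝕜 (ker f ⧸ (range g).comap (ker f).subtype) =
      Module.finrank 𝕜 ↥(ker f ⊓ ker (adjoint g)) := by
  rw [← orthogonal_range]
  exact Submodule.finrank_quotient_comap_subtype_eq_finrank_inf_orthogonal
    (range_le_ker_iff.mpr h)

end LinearMap

theorem Submodule.finrank_pi_univ {ι : Type*} [Fintype ι] {φ : ι → Type*}
    [∀ i, AddCommGroup (φ i)] [∀ i, Module 𝕜 (φ i)] [∀ i, Module.Finite 𝕜 (φ i)]
    (K : ∀ i, Submodule 𝕜 (φ i)) :
    Module.finrank 𝕜 (Submodule.pi Set.univ K) = ∑ i, Module.finrank 𝕜 (K i) := by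
  let e : Submodule.pi Set.univ K ≃ₗ[𝕜] ∀ i, K i :=
    { toFun x i := ⟨x.1 i, x.2 i (Set.mem_univ i)⟩
      invFun v := ⟨fun i => v i, fun i _ => (v i).2⟩
      map_add' _ _ := rfl
      map_smul' _ _ := rfl
      left_inv _ := rfl
      right_inv _ := rfl }
  rw [e.finrank_eq, Module.finrank_pi_fintype]

section Dirac

variable (d : ∀ n : ℕ, C n →ₗ[𝕜] C (n - 1)) {p : ℕ} (x : ∀ i : Fin (p + 2), C i)

@[simp]
theorem diracUp_apply_castSucc (j : Fin (p + 1)) :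
    diracUp d p x j.castSucc = d (j + 1) (x j.succ) := by
  simp only [diracUp, pi_apply, Fin.val_castSucc, dif_pos (Nat.add_lt_add_right j.isLt 1)]
  rfl

@[simp]
theorem diracUp_apply_last : diracUp d p x (Fin.last (p + 1)) = 0 := by
  simp [diracUp]

@[simp]
theorem diracDown_apply_zero : diracDown d p x 0 = 0 := by
  simp only [diracDown, pi_apply, Fin.val_zero, lt_self_iff_false]
  rfl

@[simp]
theorem diracDown_apply_succ (j : Fin (p + 1)) :
    diracDown d p x j.succ = adjoint (d (j + 1)) (x j.castSucc) := by
  simp only [diracDown, pi_apply, Fin.val_succ, dif_pos (Nat.succ_pos _)]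
  rfl

variable {d}

theorem diracUp_apply_mem_ker (hd : ∀ n : ℕ, (d n).comp (d (n + 1)) = 0) (j : Fin (p + 2)) :
    diracUp d p x j ∈ ker (d j) := by
  induction j using Fin.lastCases with
  | last => simp
  | cast j => simpa using congr($(hd j) (x j.succ))

theorem diracDown_apply_mem_range_adjoint (j : Fin (p + 2)) :
    diracDown d p x j ∈ range (adjoint (d j)) := by
  induction j using Fin.cases with
  | zero => rw [diracDown_apply_zero]; exact zero_mem _
  | succ j => rw [diracDown_apply_succ]; exact mem_range_self _ _

theorem ker_dirac_eq_inf (hd : ∀ n : ℕ, (d n).comp (d (n + 1)) = 0) :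
    ker (dirac d p) = ker (diracUp d p) ⊓ ker (diracDown d p) := by
  ext x
  simp only [mem_ker, Submodule.mem_inf, funext_iff, dirac, LinearMap.add_apply,
    Pi.add_apply, Pi.zero_apply, ← forall_and]
  exact forall_congr' fun j => add_eq_zero_iff_of_mem_ker_of_mem_range_adjoint (d j)
    (diracUp_apply_mem_ker x hd j) (diracDown_apply_mem_range_adjoint x j)

theorem mem_ker_diracUp (hd0 : d 0 = 0) :
    x ∈ ker (diracUp d p) ↔ ∀ i : Fin (p + 2), d i (x i) = 0 := by
  simp only [mem_ker, funext_iff, Pi.zero_apply]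
  rw [Fin.forall_fin_succ', Fin.forall_fin_succ (P := fun i => d i (x i) = 0)]
  simp only [diracUp_apply_castSucc, diracUp_apply_last, and_true]
  have hx0 : d (0 : Fin (p + 2)) (x 0) = 0 := by
    show d 0 (x 0) = 0
    rw [hd0]; rfl
  exact ⟨fun h => ⟨hx0, h⟩, And.right⟩

theorem mem_ker_diracDown :
    x ∈ ker (diracDown d p) ↔ ∀ j : Fin (p + 1), adjoint (d (j + 1)) (x j.castSucc) = 0 := by
  simp only [mem_ker, funext_iff, Pi.zero_apply]
  rw [Fin.forall_fin_succ]
  simp only [diracDown_apply_zero, diracDown_apply_succ, true_and]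

variable (d p) in
noncomputable def diracKerSummand : (i : Fin (p + 2)) → Submodule 𝕜 (C i) :=
  Fin.lastCases (motive := fun i => Submodule 𝕜 (C i)) (ker (d (p + 1)))
    fun j => ker (d j) ⊓ ker (adjoint (d (j + 1)))

@[simp]
theorem diracKerSummand_last : diracKerSummand d p (Fin.last (p + 1)) = ker (d (p + 1)) :=
  Fin.lastCases_last ..

@[simp]
theorem diracKerSummand_castSucc (j : Fin (p + 1)) :
    diracKerSummand d p j.castSucc = ker (d j) ⊓ ker (adjoint (d (j + 1))) :=
  Fin.lastCases_castSucc ..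

theorem ker_dirac_eq_pi (hd0 : d 0 = 0) (hd : ∀ n : ℕ, (d n).comp (d (n + 1)) = 0) :
    ker (dirac d p) = Submodule.pi Set.univ (diracKerSummand d p) := by
  ext x
  rw [ker_dirac_eq_inf hd, Submodule.mem_inf, mem_ker_diracUp x hd0, mem_ker_diracDown,
    Submodule.mem_pi]
  simp only [Set.mem_univ, true_implies]
  rw [Fin.forall_fin_succ' (P := fun i => x i ∈ diracKerSummand d p i),
    Fin.forall_fin_succ' (P := fun i => d i (x i) = 0)]
  simp only [diracKerSummand_last, diracKerSummand_castSucc, Submodule.mem_inf, mem_ker,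
    forall_and]
  tauto

theorem finrank_ker_dirac (hd0 : d 0 = 0) (hd : ∀ n : ℕ, (d n).comp (d (n + 1)) = 0) :
    Module.finrank 𝕜 (ker (dirac d p)) =
      ∑ i ∈ Finset.range (p + 1),
          Module.finrank 𝕜 (ker (d i) ⧸ (range (d (i + 1))).comap (ker (d i)).subtype) +
        Module.finrank 𝕜 (ker (d (p + 1))) := by
  rw [ker_dirac_eq_pi hd0 hd, Submodule.finrank_pi_univ, Fin.sum_univ_castSucc,
    ← Fin.sum_univ_eq_sum_range]
  simp only [finrank_quotient_comap_range_eq_finrank_ker_inf_ker_adjoint _ _ (hd _)]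
  congr 1
  · exact Finset.sum_congr rfl fun j _ => by rw [diracKerSummand_castSucc]; rfl
  · rw [diracKerSummand_last]; rfl

end Dirac

/-- The nullity of the `p`-th Dirac operator equals
`∑_{i=0}^p β_i` (with `β_i = dim H_i = dim (ker d_i / Im d_{i+1})`) if and only if
`d_{p+1}` is injective; in general `η(D_p) ≥ ∑_{i=0}^p β_i`. -/
theorem statement11 (d : ∀ n : ℕ, C n →ₗ[𝕜] C (n - 1))
    (hd0 : d 0 = 0)
    (hd : ∀ n : ℕ, (d n).comp (d (n + 1)) = 0) (p : ℕ) :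
    (Module.finrank 𝕜 ↥(LinearMap.ker (dirac d p)) =
        ∑ i ∈ Finset.range (p + 1),
          Module.finrank 𝕜
            (↥(LinearMap.ker (d i)) ⧸
              ((LinearMap.range (d (i + 1)) : Submodule 𝕜 (C i)).comap
                (LinearMap.ker (d i)).subtype))
      ↔ Function.Injective (d (p + 1))) ∧
    (∑ i ∈ Finset.range (p + 1),
        Module.finrank 𝕜
          (↥(LinearMap.ker (d i)) ⧸
            ((LinearMap.range (d (i + 1)) : Submodule 𝕜 (C i)).comap
              (LinearMap.ker (d i)).subtype))
      ≤ Module.finrank 𝕜 ↥(LinearMap.ker (dirac d p))) := by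
  rw [finrank_ker_dirac hd0 hd, ← ker_eq_bot, ← Submodule.finrank_eq_zero]
  exact ⟨by omega, Nat.le_add_right _ _⟩
end

section
/- If λ is an eigenvalue of D_p, then λ² is an eigenvalue of L_i for some 0 ≤ i ≤ p or of L_{p+1}^{Down}; conversely, if λ ≥ 0 is an eigenvalue of some L_i (0 ≤ i ≤ p) or of L_{p+1}^{Down}, then √λ and −√λ are eigenvalues of D_p. -/
/-!
Write `D_p = U + L`, where `U` carries the boundary maps above the diagonal and `L` their adjoints
below it. Since `d ∘ d = 0` (and hence `d^* ∘ d^* = 0`), `U² = L² = 0`, so `D_p² = UL + LU` is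
block diagonal with blocks `d d^* + d^* d = L_i` for `i ≤ p` and `d^* d = L_{p+1}^{Down}` for the
last block; the eigenvalues of a block diagonal operator are those of its blocks. An eigenvalue
`μ` of `D_p` gives the eigenvalue `μ²` of `D_p²`. Conversely, if `λ = s²` is an eigenvalue of
`D_p²`, the factorisation `D_p² - s² = (D_p - s)(D_p + s)` makes `s` or `-s` an eigenvalue of
`D_p`, and both are, because the grading `(-1)^j` on the `j`-th summand anticommutes with `D_p`.
-/

open LinearMap

variable {𝕜 : Type} [RCLike 𝕜] {C : ℕ → Type}
  [∀ n, NormedAddCommGroup (C n)] [∀ n, InnerProductSpace 𝕜 (C n)]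
  [∀ n, FiniteDimensional 𝕜 (C n)]

namespace Module.End

variable {R ι M : Type*} [CommRing R] [AddCommGroup M] [Module R M]

theorem hasEigenvalue_piMap_iff [DecidableEq ι] {φ : ι → Type*} [∀ i, AddCommGroup (φ i)]
    [∀ i, Module R (φ i)] (f : ∀ i, End R (φ i)) (μ : R) :
    HasEigenvalue (LinearMap.piMap f) μ ↔ ∃ i, (f i).HasEigenvalue μ := by
  constructor
  · intro h
    obtain ⟨v, hv⟩ := h.exists_hasEigenvector
    obtain ⟨i, hi⟩ : ∃ i, v i ≠ 0 := Function.ne_iff.mp hv.2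
    refine ⟨i, hasEigenvalue_of_hasEigenvector ⟨mem_eigenspace_iff.mpr ?_, hi⟩⟩
    exact congrFun hv.apply_eq_smul i
  · rintro ⟨i, h⟩
    obtain ⟨w, hw⟩ := h.exists_hasEigenvector
    refine hasEigenvalue_of_hasEigenvector
      ⟨mem_eigenspace_iff.mpr ?_, by simpa using hw.2⟩ (x := Pi.single i w)
    ext j
    rcases eq_or_ne j i with rfl | hj
    · simpa using hw.apply_eq_smul
    · simp [hj]

theorem HasEigenvalue.neg_of_comp_eq_neg {f ε : End R M} (hε : Function.Injective ε)
    (h : f ∘ₗ ε = -(ε ∘ₗ f)) {μ : R} (hμ : f.HasEigenvalue μ) : f.HasEigenvalue (-μ) := by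
  obtain ⟨v, hv⟩ := hμ.exists_hasEigenvector
  refine hasEigenvalue_of_hasEigenvector (x := ε v)
    ⟨mem_eigenspace_iff.mpr ?_, (map_ne_zero_iff ε hε).mpr hv.2⟩
  rw [← LinearMap.comp_apply, h, LinearMap.neg_apply, LinearMap.comp_apply, hv.apply_eq_smul,
    map_smul, neg_smul]

theorem HasEigenvalue.of_sq {f : End R M} {μ : R} (h : (f ^ 2).HasEigenvalue (μ ^ 2)) :
    f.HasEigenvalue μ ∨ f.HasEigenvalue (-μ) := by
  obtain ⟨v, hv⟩ := h.exists_hasEigenvector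
  have hv2 : f (f v) = μ ^ 2 • v := hv.apply_eq_smul
  by_cases hw : f v + μ • v = 0
  · refine .inr (hasEigenvalue_of_hasEigenvector ⟨mem_eigenspace_iff.mpr ?_, hv.2⟩)
    rw [neg_smul]
    exact eq_neg_of_add_eq_zero_left hw
  · refine .inl (hasEigenvalue_of_hasEigenvector ⟨mem_eigenspace_iff.mpr ?_, hw⟩)
    rw [map_add, map_smul, hv2, smul_add, smul_smul, ← sq, add_comm]

end Module.End

section SignGrading

variable (R : Type*) [CommRing R] {n : ℕ} (E : Fin n → Type*) [∀ i, AddCommGroup (E i)]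
  [∀ i, Module R (E i)]

noncomputable def signGrading : Module.End R (∀ i, E i) :=
  LinearMap.piMap fun j => (-1 : R) ^ (j : ℕ) • LinearMap.id

variable {R E}

theorem signGrading_apply (v : ∀ i, E i) (j : Fin n) :
    signGrading R E v j = (-1 : R) ^ (j : ℕ) • v j :=
  rfl

theorem signGrading_injective : Function.Injective (signGrading R E) :=
  Function.LeftInverse.injective (g := signGrading R E) fun v => funext fun j => by
    rw [signGrading_apply, signGrading_apply, smul_smul, ← mul_pow, neg_one_mul, neg_neg,
      one_pow, one_smul]

end SignGrading

section Dirac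

open Module.End

variable (d : ∀ n : ℕ, C n →ₗ[𝕜] C (n - 1))

omit [∀ n, FiniteDimensional 𝕜 (C n)] in
theorem apply_apply_eq_zero (hd : ∀ n : ℕ, d n ∘ₗ d (n + 1) = 0) (n : ℕ) (x : C (n + 1)) :
    d n (d (n + 1) x) = 0 :=
  LinearMap.congr_fun (hd n) x

theorem adjoint_apply_adjoint_apply_eq_zero (hd : ∀ n : ℕ, d n ∘ₗ d (n + 1) = 0) (n : ℕ)
    (x : C (n - 1)) : adjoint (d (n + 1)) (adjoint (d n) x) = 0 := by
  simpa using LinearMap.congr_fun (congrArg adjoint (hd n)) x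

omit [∀ n, FiniteDimensional 𝕜 (C n)] in
theorem diracUp_apply (p : ℕ) (v : ∀ i : Fin (p + 2), C i) (j : Fin (p + 2)) :
    diracUp d p v j =
      if h : (j : ℕ) + 1 < p + 2 then d ((j : ℕ) + 1) (v ⟨(j : ℕ) + 1, h⟩) else 0 := by
  simp only [diracUp, LinearMap.pi_apply]
  split <;> rfl

theorem diracDown_apply (p : ℕ) (v : ∀ i : Fin (p + 2), C i) (j : Fin (p + 2)) :
    diracDown d p v j =
      if 0 < (j : ℕ) then
        adjoint (d (j : ℕ)) (v ⟨(j : ℕ) - 1, lt_of_le_of_lt (Nat.sub_le _ _) j.isLt⟩)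
      else 0 := by
  simp only [diracDown, LinearMap.pi_apply]
  split <;> rfl

omit [∀ n, FiniteDimensional 𝕜 (C n)] in
theorem diracUp_comp_diracUp (hd : ∀ n : ℕ, d n ∘ₗ d (n + 1) = 0) (p : ℕ) :
    diracUp d p ∘ₗ diracUp d p = 0 := by
  refine LinearMap.ext fun v => funext fun j => ?_
  simp only [LinearMap.comp_apply, diracUp_apply]
  split_ifs <;> simp [apply_apply_eq_zero d hd]

theorem diracDown_comp_diracDown (hd : ∀ n : ℕ, d n ∘ₗ d (n + 1) = 0) (p : ℕ) :
    diracDown d p ∘ₗ diracDown d p = 0 := by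
  refine LinearMap.ext fun v => funext fun j => ?_
  obtain ⟨_ | _ | k, hk⟩ := j
  · simp [diracDown_apply]
    rfl
  · simp [diracDown_apply]
  · simp [diracDown_apply, adjoint_apply_adjoint_apply_eq_zero d hd]

noncomputable def diracSqBlock (p n : ℕ) : Module.End 𝕜 (C n) :=
  if n ≤ p then laplacian d n else laplacianDown d n

theorem diracUp_diracDown_apply (p : ℕ) (v : ∀ i : Fin (p + 2), C i) (j : Fin (p + 2)) :
    diracUp d p (diracDown d p v) j =
      if (j : ℕ) ≤ p then d ((j : ℕ) + 1) (adjoint (d ((j : ℕ) + 1)) (v j)) else 0 := by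
  rw [diracUp_apply]
  split_ifs
  · rw [diracDown_apply, if_pos (Nat.succ_pos _)]
    rfl
  · omega
  · omega
  · rfl

theorem diracDown_diracUp_apply (hd0 : d 0 = 0) (p : ℕ) (v : ∀ i : Fin (p + 2), C i)
    (j : Fin (p + 2)) : diracDown d p (diracUp d p v) j = adjoint (d j) (d j (v j)) := by
  obtain ⟨_ | k, hk⟩ := j
  · rw [diracDown_apply, if_neg (lt_irrefl 0), hd0]
    simp
  · rw [diracDown_apply, if_pos (Nat.succ_pos _), diracUp_apply]
    exact congrArg (adjoint _) (dif_pos hk)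

theorem diracUp_comp_diracDown_add_diracDown_comp_diracUp (hd0 : d 0 = 0) (p : ℕ) :
    diracUp d p ∘ₗ diracDown d p + diracDown d p ∘ₗ diracUp d p =
      LinearMap.piMap fun j : Fin (p + 2) => diracSqBlock d p j := by
  refine LinearMap.ext fun v => funext fun j => ?_
  simp only [LinearMap.add_apply, LinearMap.comp_apply, Pi.add_apply, diracUp_diracDown_apply,
    diracDown_diracUp_apply d hd0, LinearMap.coe_piMap, Pi.map_apply, diracSqBlock]
  split_ifs <;> simp [laplacian, laplacianDown]

theorem dirac_sq (hd0 : d 0 = 0) (hd : ∀ n : ℕ, d n ∘ₗ d (n + 1) = 0) (p : ℕ) :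
    dirac d p ^ 2 = LinearMap.piMap fun j : Fin (p + 2) => diracSqBlock d p j := by
  rw [sq, Module.End.mul_eq_comp, dirac, LinearMap.comp_add, LinearMap.add_comp,
    LinearMap.add_comp, diracUp_comp_diracUp d hd, diracDown_comp_diracDown d hd, zero_add,
    add_zero, add_comm (diracDown d p ∘ₗ _),
    diracUp_comp_diracDown_add_diracDown_comp_diracUp d hd0]

theorem exists_hasEigenvalue_diracSqBlock_iff (p : ℕ) (μ : 𝕜) :
    (∃ j : Fin (p + 2), HasEigenvalue (diracSqBlock d p j) μ) ↔
      (∃ i ≤ p, HasEigenvalue (laplacian d i) μ) ∨ HasEigenvalue (laplacianDown d (p + 1)) μ := by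
  rw [Fin.exists_fin_succ']
  refine or_congr ⟨fun ⟨i, hi⟩ => ⟨i, Nat.lt_succ_iff.mp i.isLt, ?_⟩,
    fun ⟨i, hip, hi⟩ => ⟨⟨i, Nat.lt_succ_of_le hip⟩, ?_⟩⟩ ?_
  · simpa [diracSqBlock, Nat.lt_succ_iff.mp i.isLt] using hi
  · simpa [diracSqBlock, hip] using hi
  · simp [diracSqBlock]

theorem hasEigenvalue_dirac_sq_iff (hd0 : d 0 = 0) (hd : ∀ n : ℕ, d n ∘ₗ d (n + 1) = 0) (p : ℕ)
    (μ : 𝕜) : HasEigenvalue (dirac d p ^ 2) μ ↔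
      (∃ i ≤ p, HasEigenvalue (laplacian d i) μ) ∨ HasEigenvalue (laplacianDown d (p + 1)) μ := by
  rw [dirac_sq d hd0 hd, hasEigenvalue_piMap_iff, exists_hasEigenvalue_diracSqBlock_iff]

omit [∀ n, FiniteDimensional 𝕜 (C n)] in
theorem diracUp_comp_signGrading (p : ℕ) :
    diracUp d p ∘ₗ signGrading 𝕜 (fun i : Fin (p + 2) => C i) =
      -(signGrading 𝕜 (fun i : Fin (p + 2) => C i) ∘ₗ diracUp d p) := by
  refine LinearMap.ext fun v => funext fun j => ?_
  simp only [LinearMap.comp_apply, LinearMap.neg_apply, Pi.neg_apply, diracUp_apply,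
    signGrading_apply]
  split_ifs <;> simp [pow_succ]

theorem diracDown_comp_signGrading (p : ℕ) :
    diracDown d p ∘ₗ signGrading 𝕜 (fun i : Fin (p + 2) => C i) =
      -(signGrading 𝕜 (fun i : Fin (p + 2) => C i) ∘ₗ diracDown d p) := by
  refine LinearMap.ext fun v => funext fun j => ?_
  obtain ⟨_ | k, hk⟩ := j
  · simp only [LinearMap.comp_apply, LinearMap.neg_apply, Pi.neg_apply, diracDown_apply,
      signGrading_apply, Fin.val_mk, lt_irrefl, if_false, smul_zero, neg_zero]
  · simp [diracDown_apply, signGrading_apply, pow_succ]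

theorem dirac_comp_signGrading (p : ℕ) :
    dirac d p ∘ₗ signGrading 𝕜 (fun i : Fin (p + 2) => C i) =
      -(signGrading 𝕜 (fun i : Fin (p + 2) => C i) ∘ₗ dirac d p) := by
  rw [dirac, LinearMap.add_comp, LinearMap.comp_add, diracUp_comp_signGrading,
    diracDown_comp_signGrading, neg_add]

theorem hasEigenvalue_dirac_neg {p : ℕ} {μ : 𝕜} (h : HasEigenvalue (dirac d p) μ) :
    HasEigenvalue (dirac d p) (-μ) :=
  h.neg_of_comp_eq_neg signGrading_injective (dirac_comp_signGrading d p)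

end Dirac

/-- If `μ` is an eigenvalue of the Dirac operator `D_p`, then `μ²`
is an eigenvalue of some Laplacian `L_i` (`0 ≤ i ≤ p`) or of `L_{p+1}^Down`;
conversely, if `λ ≥ 0` is an eigenvalue of some `L_i` (`0 ≤ i ≤ p`) or of
`L_{p+1}^Down`, then `√λ` and `-√λ` are eigenvalues of `D_p`. -/
theorem statement12 (d : ∀ n : ℕ, C n →ₗ[𝕜] C (n - 1))
    (hd0 : d 0 = 0)
    (hd : ∀ n : ℕ, (d n).comp (d (n + 1)) = 0) (p : ℕ) :
    (∀ μ : 𝕜, Module.End.HasEigenvalue (dirac d p) μ →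
      (∃ i ≤ p, Module.End.HasEigenvalue (laplacian d i) (μ ^ 2)) ∨
        Module.End.HasEigenvalue (laplacianDown d (p + 1)) (μ ^ 2)) ∧
    (∀ lam : ℝ, 0 ≤ lam →
      ((∃ i ≤ p, Module.End.HasEigenvalue (laplacian d i) ((lam : 𝕜))) ∨
        Module.End.HasEigenvalue (laplacianDown d (p + 1)) ((lam : 𝕜))) →
      Module.End.HasEigenvalue (dirac d p) ((Real.sqrt lam : ℝ) : 𝕜) ∧
        Module.End.HasEigenvalue (dirac d p) (-((Real.sqrt lam : ℝ) : 𝕜))) := by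
  refine ⟨fun μ hμ => (hasEigenvalue_dirac_sq_iff d hd0 hd p _).1 (hμ.pow 2),
    fun lam hlam hL => ?_⟩
  have hsq : ((Real.sqrt lam : ℝ) : 𝕜) ^ 2 = lam := by
    rw [← RCLike.ofReal_pow, Real.sq_sqrt hlam]
  rw [← hsq, ← hasEigenvalue_dirac_sq_iff d hd0 hd p] at hL
  rcases hL.of_sq with h | h
  · exact ⟨h, hasEigenvalue_dirac_neg d h⟩
  · exact ⟨by simpa using hasEigenvalue_dirac_neg d h, h⟩
end
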